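/- Let G be a graph explainable with respect to the exactly-2-relation by a tree with non-negative integer weights in which all pairs of distinct leaves have positive distance. Then G contains no induced C_4 and no induced K_4 − e; consequently G is chordal. -/

import Mathlib

open SimpleGraph

noncomputable def treePath {V : Type} (T : SimpleGraph V) (hT : T.IsTree) (x y : V) :
    T.Walk x y := (hT.existsUnique_path x y).choose

/-- The weighted distance between two vertices of a tree: the sum of the weights
`lam` over the edges of the unique path. -/
noncomputable def treeDist {V : Type} (T : SimpleGraph V) (hT : T.IsTree)
    (lam : Sym2 V → ℕ) (x y : V) : ℕ :=
  ((treePath T hT x y).edges.map lam).sum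

/-- A leaf of a tree: a vertex of degree at most one. -/
def IsLeaf {V : Type} (T : SimpleGraph V) (v : V) : Prop :=
  (T.neighborSet v).ncard ≤ 1

/-- `(T, lam)` explains the graph `G` w.r.t. the exactly-`k`-relation, where
`f` identifies the vertices of `G` with the leaves of `T`. -/
def ExplainedBy {α V : Type} (G : SimpleGraph α) (T : SimpleGraph V) (hT : T.IsTree)
    (lam : Sym2 V → ℕ) (f : α → V) (k : ℕ) : Prop :=
  Function.Injective f ∧ (∀ v : V, (∃ a, f a = v) ↔ IsLeaf T v) ∧
    (∀ x y : α, G.Adj x y ↔ treeDist T hT lam (f x) (f y) = k)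

/-- `G` can be explained w.r.t. the exactly-`k`-relation by some finite edge-weighted tree. -/
def Explainable {α : Type} (G : SimpleGraph α) (k : ℕ) : Prop :=
  ∃ (V : Type) (_ : Finite V) (T : SimpleGraph V) (hT : T.IsTree) (lam : Sym2 V → ℕ)
    (f : α → V), ExplainedBy G T hT lam f k

/-- `G` can be explained w.r.t. the exactly-`k`-relation by a tree in which all pairs of
distinct leaves are at positive weighted distance (discrete 0-relation). -/
def ExplainableDiscrete {α : Type} (G : SimpleGraph α) (k : ℕ) : Prop :=
  ∃ (V : Type) (_ : Finite V) (T : SimpleGraph V) (hT : T.IsTree) (lam : Sym2 V → ℕ)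
    (f : α → V), ExplainedBy G T hT lam f k ∧
      ∀ x y : α, x ≠ y → treeDist T hT lam (f x) (f y) ≠ 0

/-!
Write `d` for the weighted distance in the tree. An edge `e` lies on the path `x – z` iff it lies on exactly one of the paths
`x – y`, `y – z`. Summing the weights edge by edge, `d x y + d y z - d x z` is twice the weight
of the edges common to `x – y` and `y – z`: it is even and non-negative. Moreover the splits
induced by two edges on four leaves `a, b, c, d` cannot cross, which gives the four-point
condition `d a b + d c d ≤ max (d a c + d b d) (d a d + d b c)`.

In an induced cycle `v₀ v₁ ⋯` of length `n ≥ 4` of a graph explained by `d`, neighbours are at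
distance `2`, and `v_i, v_{i+2}` are at a distance that is even, at most `4`, and neither `0` nor
`2`, hence `4`. The four-point condition lets these geodesics be concatenated, so that
`d v₀ v_k = 2k` for all `k`; but `v_n = v₀`. In an induced `K₄ − 01` the same argument gives
`d 0 1 = 4`, and then `d 0 1 + d 2 3 = 6 > 4 = d 0 2 + d 1 3 = d 0 3 + d 1 2`.
-/

section TreePath

variable {V : Type} {T : SimpleGraph V} (hT : T.IsTree)

theorem treePath_isPath (x y : V) : (treePath T hT x y).IsPath :=
  (hT.existsUnique_path x y).choose_spec.1

theorem treePath_eq_of_isPath {x y : V} {p : T.Walk x y} (hp : p.IsPath) :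
    treePath T hT x y = p :=
  ((hT.existsUnique_path x y).choose_spec.2 p hp).symm

theorem treePath_self (x : V) : treePath T hT x x = .nil :=
  treePath_eq_of_isPath hT .nil

theorem treePath_reverse (x y : V) : treePath T hT y x = (treePath T hT x y).reverse :=
  treePath_eq_of_isPath hT (treePath_isPath hT x y).reverse

theorem mem_edges_treePath_comm {x y : V} {e : Sym2 V} :
    e ∈ (treePath T hT x y).edges ↔ e ∈ (treePath T hT y x).edges := by
  rw [treePath_reverse hT x y, Walk.edges_reverse, List.mem_reverse]

theorem mem_edges_treePath_concat_iff {x y w : V} (h : T.Adj y w) {e : Sym2 V} :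
    e ∈ (treePath T hT x w).edges ↔ Xor (e ∈ (treePath T hT x y).edges) (e = s(y, w)) := by
  -- Either the path `x – y` runs through `w`, or it extends by the edge `y w` to the path `x – w`.
  by_cases hw : w ∈ (treePath T hT x y).support
  · have hy : y ∉ (treePath T hT x w).support :=
      hT.isAcyclic.ne_mem_support_of_support_of_adj_of_isPath (treePath_isPath hT x y)
        (treePath_isPath hT x w) h hw
    have hs : s(y, w) ∉ (treePath T hT x w).edges := fun hs =>
      hy (Walk.fst_mem_support_of_mem_edges _ hs)
    rw [hT.isAcyclic.path_concat (treePath_isPath hT x w) (treePath_isPath hT x y) h.symm hw,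
      Walk.edges_concat, Sym2.eq_swap]
    by_cases he : e = s(y, w)
    · simp [he, hs]
    · simp [he, xor_def]
  · have hs : s(y, w) ∉ (treePath T hT x y).edges := fun hs =>
      hw (Walk.snd_mem_support_of_mem_edges _ hs)
    rw [treePath_eq_of_isPath hT ((treePath_isPath hT x y).concat hw h), Walk.edges_concat]
    by_cases he : e = s(y, w)
    · simp [he, hs]
    · simp [he, xor_def]

theorem mem_edges_treePath_iff_xor (x y z : V) {e : Sym2 V} :
    e ∈ (treePath T hT x z).edges ↔
      Xor (e ∈ (treePath T hT x y).edges) (e ∈ (treePath T hT y z).edges) := by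
  have q : T.Walk y z := treePath T hT y z
  induction q using Walk.concatRec with
  | Hnil => simp [treePath_self, xor_def]
  | Hconcat q h ih =>
    rw [mem_edges_treePath_concat_iff hT h, mem_edges_treePath_concat_iff hT h]
    simp only [xor_def] at ih ⊢
    tauto

theorem mem_edges_treePath_or_of_mem_support {x y z w u : V}
    (hxy : u ∈ (treePath T hT x y).support) (hzw : u ∈ (treePath T hT z w).support)
    {e : Sym2 V} (he : e ∈ (treePath T hT x z).edges) :
    e ∈ (treePath T hT x y).edges ∨ e ∈ (treePath T hT z w).edges := by
  classical
  have hsub : ∀ {a b : V} (hu : u ∈ (treePath T hT a b).support),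
      (treePath T hT a u).edges ⊆ (treePath T hT a b).edges := fun {a b} hu => by
    rw [treePath_eq_of_isPath hT ((treePath_isPath hT a b).takeUntil hu)]
    exact Walk.edges_takeUntil_subset_edges _ hu
  rw [mem_edges_treePath_iff_xor hT x u z, mem_edges_treePath_comm hT (x := u)] at he
  exact he.or.imp (fun h => hsub hxy h) (fun h => hsub hzw h)

theorem not_crossing_splits {a b c d : V} {e₁ e₂ : Sym2 V}
    (h₁ : e₁ ∈ (treePath T hT a b).edges ∧ e₁ ∈ (treePath T hT c d).edges ∧
      e₁ ∉ (treePath T hT a c).edges)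
    (h₂ : e₂ ∈ (treePath T hT a b).edges ∧ e₂ ∈ (treePath T hT c d).edges ∧
      e₂ ∉ (treePath T hT a d).edges) : False := by
  have habd := fun e => mem_edges_treePath_iff_xor hT a b d (e := e)
  have hacd := fun e => mem_edges_treePath_iff_xor hT a c d (e := e)
  simp only [xor_def] at habd hacd
  have h₂ac : e₂ ∈ (treePath T hT a c).edges := by grind
  have h₂bd : e₂ ∈ (treePath T hT b d).edges := by grind
  have h₁bd : e₁ ∉ (treePath T hT b d).edges := by grind
  -- The paths `a – c` and `b – d` meet at an endpoint of `e₂`, so `a – b` runs inside their union.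
  have hu := Sym2.out_fst_mem e₂
  rcases mem_edges_treePath_or_of_mem_support hT (Walk.mem_support_of_mem_edges h₂ac hu)
    (Walk.mem_support_of_mem_edges h₂bd hu) h₁.1 with h | h
  · exact h₁.2.2 h
  · exact h₁bd h

end TreePath

section TreeDist

variable {V : Type} {T : SimpleGraph V} (hT : T.IsTree) (lam : Sym2 V → ℕ)

theorem treeDist_self (x : V) : treeDist T hT lam x x = 0 := by
  simp [treeDist, treePath_self]

theorem treeDist_comm (x y : V) : treeDist T hT lam x y = treeDist T hT lam y x := by
  simp [treeDist, treePath_reverse hT x y]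

theorem treeDist_eq_sum [Fintype V] [DecidableEq V] (x y : V) :
    treeDist T hT lam x y = ∑ e, if e ∈ (treePath T hT x y).edges then lam e else 0 := by
  rw [treeDist, ← List.sum_toFinset _ (treePath_isPath hT x y).edges_nodup, ← Finset.sum_filter]
  congr 1
  ext e
  simp

theorem treeDist_add_treeDist [Fintype V] [DecidableEq V] (x y z : V) :
    treeDist T hT lam x y + treeDist T hT lam y z = treeDist T hT lam x z +
      2 * ∑ e, if e ∈ (treePath T hT x y).edges ∧ e ∈ (treePath T hT y z).edges then lam e
        else 0 := by
  simp only [treeDist_eq_sum hT lam, Finset.mul_sum, ← Finset.sum_add_distrib]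
  refine Finset.sum_congr rfl fun e _ => ?_
  have := mem_edges_treePath_iff_xor hT x y z (e := e)
  split_ifs <;> simp_all [xor_def]
  omega

theorem ite_mem_edges_treePath_add_le [DecidableEq V] (a b c d : V) (e : Sym2 V)
    (h : lam e ≠ 0 → ¬(e ∈ (treePath T hT a b).edges ∧ e ∈ (treePath T hT c d).edges ∧
      e ∉ (treePath T hT a c).edges)) :
    (if e ∈ (treePath T hT a b).edges then lam e else 0) +
        (if e ∈ (treePath T hT c d).edges then lam e else 0) ≤
      (if e ∈ (treePath T hT a c).edges then lam e else 0) +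
        (if e ∈ (treePath T hT b d).edges then lam e else 0) := by
  have hcd := mem_edges_treePath_iff_xor hT c a d (e := e)
  have hbd := mem_edges_treePath_iff_xor hT b a d (e := e)
  rw [← mem_edges_treePath_comm hT (x := a) (y := c)] at hcd
  rw [← mem_edges_treePath_comm hT (x := a) (y := b)] at hbd
  split_ifs <;> simp_all [xor_def]

theorem treeDist_four_point [Finite V] (a b c d : V) :
    treeDist T hT lam a b + treeDist T hT lam c d ≤
      max (treeDist T hT lam a c + treeDist T hT lam b d)
        (treeDist T hT lam a d + treeDist T hT lam b c) := by
  classical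
  have := Fintype.ofFinite V
  simp only [treeDist_eq_sum hT lam, ← Finset.sum_add_distrib]
  -- Edge by edge, the left side exceeds the first sum only on edges splitting `{a, c} | {b, d}`,
  -- and the second only on edges splitting `{a, d} | {b, c}`; both kinds cannot occur.
  by_cases hsplit : ∃ e, e ∈ (treePath T hT a b).edges ∧ e ∈ (treePath T hT c d).edges ∧
      e ∉ (treePath T hT a c).edges
  · obtain ⟨e₁, he₁⟩ := hsplit
    refine le_max_of_le_right (Finset.sum_le_sum fun e _ => ?_)
    have := ite_mem_edges_treePath_add_le hT lam a b d c e fun _ he =>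
      not_crossing_splits hT he₁ ⟨he.1, (mem_edges_treePath_comm hT).1 he.2.1, he.2.2⟩
    simpa only [mem_edges_treePath_comm hT (x := d) (y := c)] using this
  · exact le_max_of_le_left (Finset.sum_le_sum fun e _ =>
      ite_mem_edges_treePath_add_le hT lam a b c d e fun _ he => hsplit ⟨e, he⟩)

end TreeDist

structure IsEvenTreeMetric {β : Type*} (d : β → β → ℕ) : Prop where
  dist_self : ∀ x, d x x = 0
  dist_comm : ∀ x y, d x y = d y x
  exists_add_eq : ∀ x y z, ∃ j, d x y + d y z = d x z + 2 * j
  four_point : ∀ w x y z, d w x + d y z ≤ max (d w y + d x z) (d w z + d x y)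

namespace IsEvenTreeMetric

variable {β γ : Type*} {d : β → β → ℕ}

theorem comp (hd : IsEvenTreeMetric d) (f : γ → β) :
    IsEvenTreeMetric fun x y => d (f x) (f y) where
  dist_self x := hd.dist_self (f x)
  dist_comm x y := hd.dist_comm (f x) (f y)
  exists_add_eq x y z := hd.exists_add_eq (f x) (f y) (f z)
  four_point w x y z := hd.four_point (f w) (f x) (f y) (f z)

theorem eq_four_of_eq_two (hd : IsEvenTreeMetric d) {x y z : β} (hxy : d x y = 2)
    (hyz : d y z = 2) (h₀ : d x z ≠ 0) (h₂ : d x z ≠ 2) : d x z = 4 := by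
  obtain ⟨j, hj⟩ := hd.exists_add_eq x y z
  omega

theorem add_add_of_between (hd : IsEvenTreeMetric d) {a b c e : β}
    (habc : d a b + d b c = d a c) (hbce : d b c + d c e = d b e) (hbc : d b c ≠ 0) :
    d a e = d a b + d b c + d c e := by
  obtain ⟨j, hj⟩ := hd.exists_add_eq a b e
  have := hd.dist_comm c b
  rcases le_max_iff.mp (hd.four_point a c b e) with h | h <;> omega

theorem dist_zero_eq_two_mul (hd : IsEvenTreeMetric d) {g : ℕ → β}
    (h₁ : ∀ i, d (g i) (g (i + 1)) = 2) (h₂ : ∀ i, d (g i) (g (i + 2)) = 4) (k : ℕ) :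
    d (g 0) (g k) = 2 * k := by
  suffices ∀ k, d (g 0) (g k) = 2 * k ∧ d (g 0) (g (k + 1)) = 2 * k + 2 from (this k).1
  intro k
  induction k with
  | zero => exact ⟨hd.dist_self _, h₁ 0⟩
  | succ k ih =>
    refine ⟨ih.2, ?_⟩
    have := hd.add_add_of_between (a := g 0) (b := g k) (c := g (k + 1)) (e := g (k + 2))
      (by rw [ih.1, ih.2, h₁]) (by rw [h₁, h₁, h₂]) (by rw [h₁]; decide)
    rw [this, ih.1, h₁, h₁]
    ring

end IsEvenTreeMetric

structure ExplainsExactlyTwo {β : Type*} (d : β → β → ℕ) (G : SimpleGraph β) : Prop where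
  adj_iff : ∀ x y, G.Adj x y ↔ d x y = 2
  ne_zero : ∀ x y, x ≠ y → d x y ≠ 0

theorem ExplainsExactlyTwo.comap {β γ : Type*} {d : β → β → ℕ} {G : SimpleGraph β}
    {H : SimpleGraph γ} (h : ExplainsExactlyTwo d G) (f : H ↪g G) :
    ExplainsExactlyTwo (fun x y => d (f x) (f y)) H where
  adj_iff _ _ := f.map_adj_iff.symm.trans (h.adj_iff _ _)
  ne_zero _ _ hxy := h.ne_zero _ _ (f.injective.ne hxy)

open Fin.NatCast in
theorem not_explainsExactlyTwo_cycleGraph {n : ℕ} {d : Fin n → Fin n → ℕ}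
    (hd : IsEvenTreeMetric d) (hn : 4 ≤ n) : ¬ ExplainsExactlyTwo d (cycleGraph n) := by
  obtain ⟨m, rfl⟩ := Nat.exists_eq_add_of_le' hn
  intro h
  have hnext (i : Fin (m + 4)) : d i (i + 1) = 2 :=
    (h.adj_iff _ _).1 (cycleGraph_adj.2 (.inr (add_sub_cancel_left i 1)))
  have hfar (i : Fin (m + 4)) : d i (i + 2) = 4 := by
    refine hd.eq_four_of_eq_two (hnext i)
      (by simpa [add_assoc, one_add_one_eq_two] using hnext (i + 1))
      (h.ne_zero _ _ (by simp [Fin.ext_iff, Nat.mod_eq_of_lt])) fun h₂ => ?_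
    refine (cycleGraph_adj.not.2 ?_) ((h.adj_iff _ _).2 h₂)
    rw [sub_add_cancel_left, add_sub_cancel_left, neg_eq_iff_add_eq_zero]
    simp [Fin.ext_iff, Fin.val_add, Nat.mod_eq_of_lt, show m + 2 + 2 = m + 4 from rfl]
  have := hd.dist_zero_eq_two_mul (g := fun k : ℕ => (k : Fin (m + 4)))
    (fun i => by simpa using hnext i) (fun i => by simpa [add_assoc] using hfar i) (m + 4)
  simp [hd.dist_self] at this

theorem not_explainsExactlyTwo_top_deleteEdges {d : Fin 4 → Fin 4 → ℕ}
    (hd : IsEvenTreeMetric d) :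
    ¬ ExplainsExactlyTwo d ((⊤ : SimpleGraph (Fin 4)).deleteEdges {s(0, 1)}) := by
  intro h
  have hadj (i j : Fin 4) (hij : i ≠ j := by decide) (h01 : s(i, j) ≠ s(0, 1) := by decide) :
      d i j = 2 :=
    (h.adj_iff i j).1 (by simp [hij, h01])
  have h01 : d 0 1 = 4 := hd.eq_four_of_eq_two (hadj 0 2) (hadj 2 1) (h.ne_zero 0 1 (by decide))
    fun h₂ => by simpa using (h.adj_iff 0 1).2 h₂
  have := hd.four_point 0 1 2 3
  rw [h01, hadj 2 3, hadj 0 2, hadj 1 3, hadj 0 3, hadj 1 2] at this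
  norm_num at this

theorem isEvenTreeMetric_treeDist {V : Type} [Finite V] {T : SimpleGraph V} (hT : T.IsTree)
    (lam : Sym2 V → ℕ) : IsEvenTreeMetric (treeDist T hT lam) where
  dist_self := treeDist_self hT lam
  dist_comm := treeDist_comm hT lam
  exists_add_eq x y z := by
    classical
    have := Fintype.ofFinite V
    exact ⟨_, treeDist_add_treeDist hT lam x y z⟩
  four_point := treeDist_four_point hT lam

/-- A graph explainable w.r.t. the exactly-2-relation with all leaf distances positive
has no induced C_4, no induced K_4 − e, and is chordal (no induced cycle of length ≥ 4). -/
theorem stmt14 {α : Type} (G : SimpleGraph α) (hG : ExplainableDiscrete G 2) :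
    IsEmpty (cycleGraph 4 ↪g G) ∧
      IsEmpty (((⊤ : SimpleGraph (Fin 4)).deleteEdges {s(0, 1)}) ↪g G) ∧
      ∀ n, 4 ≤ n → IsEmpty (cycleGraph n ↪g G) := by
  obtain ⟨V, _, T, hT, lam, f, ⟨-, -, hadj⟩, hpos⟩ := hG
  set d := fun x y => treeDist T hT lam (f x) (f y)
  have hd : IsEvenTreeMetric d := (isEvenTreeMetric_treeDist hT lam).comp f
  have hexp : ExplainsExactlyTwo d G := ⟨hadj, hpos⟩
  have hcycle (n : ℕ) (hn : 4 ≤ n) : IsEmpty (cycleGraph n ↪g G) :=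
    ⟨fun e => not_explainsExactlyTwo_cycleGraph (hd.comp e) hn (hexp.comap e)⟩
  exact ⟨hcycle 4 le_rfl,
    ⟨fun e => not_explainsExactlyTwo_top_deleteEdges (hd.comp e) (hexp.comap e)⟩, hcycle⟩
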